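/- Let M = (S, Act, δ) be an MDP, μ_0 ∈ D(S) an initial distribution, and H ⊆ D(S) a safe set. Then μ_0 is H-safe under some (path) strategy if and only if there exists a distribution strategy τ such that μ_0 is H-safe under τ (i.e., the stream μ_0, μ_{i+1} = step(τ(μ_i), μ_i) satisfies μ_i ∈ H for all i ≥ 0). -/
import Mathlib


open Finset

/-- A probability distribution on a finite type, represented as a function. -/
def IsDist {X : Type*} [Fintype X] (μ : X → ℝ) : Prop :=
  (∀ x, 0 ≤ μ x) ∧ ∑ x, μ x = 1

/-- A Markov decision process with finite state space `S` and finite action space `Act`. -/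
structure MDP (S Act : Type*) [Fintype S] [Fintype Act] where
  avail : S → Finset Act
  avail_nonempty : ∀ s, (avail s).Nonempty
  trans : S → Act → S → ℝ
  trans_dist : ∀ s, ∀ a ∈ avail s, IsDist (trans s a)

variable {S Act : Type*} [Fintype S] [Fintype Act] [DecidableEq S]

/-- `σ` is a one-step (memoryless) strategy: at each state a probability
distribution over actions, supported on the available actions. -/
def IsOneStep (M : MDP S Act) (σ : S → Act → ℝ) : Prop :=
  ∀ s, (∀ a, 0 ≤ σ s a) ∧ (∀ a, a ∉ M.avail s → σ s a = 0) ∧ ∑ a, σ s a = 1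

/-- One-step application of a one-step strategy to a distribution over states:
`step(σ,μ)(s') = Σ_s Σ_a μ(s)·σ(s)(a)·δ(s,a)(s')`. -/
def mdpStep (M : MDP S Act) (σ : S → Act → ℝ) (μ : S → ℝ) : S → ℝ :=
  fun s' => ∑ s, ∑ a, μ s * σ s a * M.trans s a s'

/-- A finite path `s₀ a₀ s₁ a₁ … sₙ`: the first state together with the list
`[(a₀,s₁),…,(a_{n-1},sₙ)]`. -/
abbrev FinPath (S Act : Type*) := S × List (Act × S)

/-- The last state of a finite path. -/
def lastState {S Act : Type*} (ρ : FinPath S Act) : S :=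
  ρ.2.foldl (fun _ p => p.2) ρ.1

/-- `π` is a path strategy: it assigns to each finite path a probability
distribution over actions, supported on the actions available at the last state. -/
def IsPathStrategy (M : MDP S Act) (π : FinPath S Act → Act → ℝ) : Prop :=
  ∀ ρ, (∀ a, 0 ≤ π ρ a) ∧ (∀ a, a ∉ M.avail (lastState ρ) → π ρ a = 0) ∧ ∑ a, π ρ a = 1

/-- The joint distribution `ν_n` over paths of length `n` induced by a path strategy `π`
and initial distribution `μ0`: `ν_0(s) = μ0(s)` and
`ν_{n+1}(ρ a s') = ν_n(ρ)·π(ρ)(a)·δ(last(ρ),a)(s')` (and `0` on paths of the wrong length). -/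
def pathDist (M : MDP S Act) (π : FinPath S Act → Act → ℝ) (μ0 : S → ℝ) :
    ℕ → FinPath S Act → ℝ
  | 0 => fun ρ => match ρ.2 with
      | [] => μ0 ρ.1
      | _ :: _ => 0
  | n + 1 => fun ρ =>
      match ρ.2.getLast? with
      | none => 0
      | some (a, s') =>
          pathDist M π μ0 n (ρ.1, ρ.2.dropLast) * π (ρ.1, ρ.2.dropLast) a *
            M.trans (lastState (ρ.1, ρ.2.dropLast)) a s'

/-- The induced stream of state distributions: `μ_n^π(s)` is the total mass of
paths of length `n` ending in `s`. -/
def distStream (M : MDP S Act) (π : FinPath S Act → Act → ℝ) (μ0 : S → ℝ) (n : ℕ) : S → ℝ :=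
  fun s => ∑ s0 : S, ∑ f : Fin n → Act × S,
    if lastState (s0, List.ofFn f) = s then pathDist M π μ0 n (s0, List.ofFn f) else 0

/-- The stream of distributions induced by a distribution strategy `τ`:
`μ_0 = μ0`, `μ_{i+1} = step(τ(μ_i), μ_i)`. -/
def tauStream (M : MDP S Act) (τ : (S → ℝ) → S → Act → ℝ) (μ0 : S → ℝ) : ℕ → S → ℝ
  | 0 => μ0
  | n + 1 => mdpStep M (τ (tauStream M τ μ0 n)) (tauStream M τ μ0 n)


/-! ### Auxiliary lemmas -/

open scoped Classical

section Aux

variable (M : MDP S Act) (π : FinPath S Act → Act → ℝ) (μ0 : S → ℝ)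

lemma lastState_concat (s0 : S) (l : List (Act × S)) (p : Act × S) :
    lastState (s0, l ++ [p]) = p.2 := by
  simp [lastState, List.foldl_append]

lemma ofFn_snoc {n : ℕ} {X : Type*} (f : Fin n → X) (p : X) :
    List.ofFn (Fin.snoc f p) = List.ofFn f ++ [p] := by
  rw [List.ofFn_succ']
  simp [List.concat_eq_append]

lemma pathDist_concat (n : ℕ) (s0 : S) (l : List (Act × S)) (a : Act) (t : S) :
    pathDist M π μ0 (n + 1) (s0, l ++ [(a, t)]) =
      pathDist M π μ0 n (s0, l) * π (s0, l) a * M.trans (lastState (s0, l)) a t := by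
  simp only [pathDist, List.getLast?_concat, List.dropLast_concat]

lemma pathDist_nonneg (hπ : IsPathStrategy M π) (h0 : ∀ s, 0 ≤ μ0 s) :
    ∀ n ρ, 0 ≤ pathDist M π μ0 n ρ := by
  intro n
  induction n with
  | zero =>
    rintro ⟨s0, l⟩
    cases l with
    | nil => exact h0 s0
    | cons p l => exact le_refl _
  | succ n ih =>
    rintro ⟨s0, l⟩
    show (0:ℝ) ≤ (match l.getLast? with
      | none => (0 : ℝ)
      | some (a, s') =>
          pathDist M π μ0 n (s0, l.dropLast) * π (s0, l.dropLast) a *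
            M.trans (lastState (s0, l.dropLast)) a s')
    rcases hg : l.getLast? with _ | ⟨a, t⟩
    · exact le_refl _
    · show 0 ≤ pathDist M π μ0 n (s0, l.dropLast) * π (s0, l.dropLast) a *
          M.trans (lastState (s0, l.dropLast)) a t
      by_cases ha : a ∈ M.avail (lastState (s0, l.dropLast))
      · exact mul_nonneg (mul_nonneg (ih _) ((hπ _).1 a)) ((M.trans_dist _ a ha).1 t)
      · rw [(hπ (s0, l.dropLast)).2.1 a ha, mul_zero, zero_mul]

/-- The mass of paths of length `n` ending in `s` which then take action `a`. -/
noncomputable def mass (n : ℕ) (s : S) (a : Act) : ℝ :=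
  ∑ s0 : S, ∑ f : Fin n → Act × S,
    if lastState (s0, List.ofFn f) = s then
      pathDist M π μ0 n (s0, List.ofFn f) * π (s0, List.ofFn f) a else 0

lemma mass_nonneg (hπ : IsPathStrategy M π) (h0 : ∀ s, 0 ≤ μ0 s) (n : ℕ) (s : S) (a : Act) :
    0 ≤ mass M π μ0 n s a := by
  refine Finset.sum_nonneg fun s0 _ => Finset.sum_nonneg fun f _ => ?_
  split
  · exact mul_nonneg (pathDist_nonneg M π μ0 hπ h0 n _) ((hπ _).1 a)
  · exact le_refl _

lemma mass_eq_zero (hπ : IsPathStrategy M π) {s : S} {a : Act} (ha : a ∉ M.avail s) (n : ℕ) :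
    mass M π μ0 n s a = 0 := by
  refine Finset.sum_eq_zero fun s0 _ => Finset.sum_eq_zero fun f _ => ?_
  split
  · next h => rw [(hπ _).2.1 a (by rw [h]; exact ha), mul_zero]
  · rfl

lemma sum_mass (hπ : IsPathStrategy M π) (n : ℕ) (s : S) :
    ∑ a, mass M π μ0 n s a = distStream M π μ0 n s := by
  unfold mass distStream
  rw [Finset.sum_comm]
  refine Finset.sum_congr rfl fun s0 _ => ?_
  rw [Finset.sum_comm]
  refine Finset.sum_congr rfl fun f _ => ?_
  by_cases h : lastState (s0, List.ofFn f) = s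
  · simp only [h, if_true]
    rw [← Finset.mul_sum, (hπ (s0, List.ofFn f)).2.2, mul_one]
  · simp [h]

lemma distStream_zero (s : S) : distStream M π μ0 0 s = μ0 s := by
  unfold distStream
  simp [lastState, pathDist, Finset.sum_ite_eq']

lemma distStream_nonneg (hπ : IsPathStrategy M π) (h0 : ∀ s, 0 ≤ μ0 s) (n : ℕ) (s : S) :
    0 ≤ distStream M π μ0 n s := by
  refine Finset.sum_nonneg fun s0 _ => Finset.sum_nonneg fun f _ => ?_
  split
  · exact pathDist_nonneg M π μ0 hπ h0 n _
  · exact le_refl _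

lemma distStream_succ (n : ℕ) (s' : S) :
    distStream M π μ0 (n + 1) s' = ∑ s, ∑ a, mass M π μ0 n s a * M.trans s a s' := by
  have lhs : distStream M π μ0 (n + 1) s' =
      ∑ s0 : S, ∑ f : Fin n → Act × S, ∑ a : Act,
        pathDist M π μ0 n (s0, List.ofFn f) * π (s0, List.ofFn f) a *
          M.trans (lastState (s0, List.ofFn f)) a s' := by
    unfold distStream
    refine Finset.sum_congr rfl fun s0 _ => ?_
    rw [← Equiv.sum_comp (Fin.snocEquiv (fun _ => Act × S))
      (fun g => if lastState (s0, List.ofFn g) = s' then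
        pathDist M π μ0 (n+1) (s0, List.ofFn g) else 0)]
    rw [Fintype.sum_prod_type]
    rw [Finset.sum_comm]
    refine Finset.sum_congr rfl fun f _ => ?_
    rw [Fintype.sum_prod_type]
    refine Finset.sum_congr rfl fun a _ => ?_
    have he : ∀ p : Act × S, (Fin.snocEquiv (fun _ => Act × S)) (p, f) = Fin.snoc f p := by
      intro p; funext i; rfl
    calc ∑ t : S, (if lastState (s0, List.ofFn ((Fin.snocEquiv (fun _ => Act × S)) ((a, t), f))) = s'
            then pathDist M π μ0 (n+1) (s0, List.ofFn ((Fin.snocEquiv (fun _ => Act × S)) ((a, t), f))) else 0)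
        = ∑ t : S, (if t = s' then
            pathDist M π μ0 n (s0, List.ofFn f) * π (s0, List.ofFn f) a *
              M.trans (lastState (s0, List.ofFn f)) a t else 0) := by
          refine Finset.sum_congr rfl fun t _ => ?_
          rw [he, ofFn_snoc, lastState_concat, pathDist_concat]
      _ = _ := by rw [Finset.sum_ite_eq' Finset.univ s']; simp
  rw [lhs]
  have rhs : ∑ s, ∑ a, mass M π μ0 n s a * M.trans s a s' =
      ∑ a : Act, ∑ s0 : S, ∑ f : Fin n → Act × S,
        pathDist M π μ0 n (s0, List.ofFn f) * π (s0, List.ofFn f) a *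
          M.trans (lastState (s0, List.ofFn f)) a s' := by
    rw [Finset.sum_comm]
    refine Finset.sum_congr rfl fun a _ => ?_
    unfold mass
    simp only [Finset.sum_mul, ite_mul, zero_mul]
    rw [Finset.sum_comm]
    refine Finset.sum_congr rfl fun s0 _ => ?_
    rw [Finset.sum_comm]
    refine Finset.sum_congr rfl fun f _ => ?_
    rw [Finset.sum_ite_eq Finset.univ (lastState (s0, List.ofFn f))]
    simp
  rw [rhs]
  exact (Finset.sum_congr rfl fun s0 _ => Finset.sum_comm).trans Finset.sum_comm

lemma mass_of_oneStep (n : ℕ) (σ : S → Act → ℝ)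
    (h : ∀ (s0 : S) (f : Fin n → Act × S) (a : Act),
      π (s0, List.ofFn f) a = σ (lastState (s0, List.ofFn f)) a)
    (s : S) (a : Act) :
    mass M π μ0 n s a = distStream M π μ0 n s * σ s a := by
  unfold mass distStream
  rw [Finset.sum_mul]
  refine Finset.sum_congr rfl fun s0 _ => ?_
  rw [Finset.sum_mul]
  refine Finset.sum_congr rfl fun f _ => ?_
  rw [h]
  by_cases hl : lastState (s0, List.ofFn f) = s
  · simp [hl]
  · simp [hl]

/-- The default (uniform) one-step strategy. -/
noncomputable def dflt : S → Act → ℝ :=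
  fun s a => if a ∈ M.avail s then ((M.avail s).card : ℝ)⁻¹ else 0

lemma dflt_oneStep : IsOneStep M (dflt M) := by
  intro s
  refine ⟨fun a => ?_, fun a ha => if_neg ha, ?_⟩
  · unfold dflt; split
    · positivity
    · exact le_refl _
  · have hc : ((M.avail s).card : ℝ) ≠ 0 := by
      exact_mod_cast Finset.card_ne_zero_of_mem (M.avail_nonempty s).choose_spec
    simp only [dflt, Finset.sum_ite_mem, Finset.univ_inter, Finset.sum_const, nsmul_eq_mul]
    exact mul_inv_cancel₀ hc

end Aux

section Main

variable (M : MDP S Act) (π : FinPath S Act → Act → ℝ) (μ0 : S → ℝ)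

/-- The averaged one-step strategy at time `n` induced by a path strategy. -/
noncomputable def sig (n : ℕ) : S → Act → ℝ := fun s a =>
  if distStream M π μ0 n s = 0 then dflt M s a
  else mass M π μ0 n s a / distStream M π μ0 n s

lemma sig_oneStep (hπ : IsPathStrategy M π) (h0 : ∀ s, 0 ≤ μ0 s) (n : ℕ) :
    IsOneStep M (sig M π μ0 n) := by
  intro s
  refine ⟨fun a => ?_, fun a ha => ?_, ?_⟩
  · unfold sig; split
    · exact (dflt_oneStep M s).1 a
    · exact div_nonneg (mass_nonneg M π μ0 hπ h0 n s a) (distStream_nonneg M π μ0 hπ h0 n s)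
  · unfold sig; split
    · exact (dflt_oneStep M s).2.1 a ha
    · rw [mass_eq_zero M π μ0 hπ ha n, zero_div]
  · by_cases h : distStream M π μ0 n s = 0
    · simp only [sig, if_pos h]
      exact (dflt_oneStep M s).2.2
    · simp only [sig, if_neg h]
      rw [← Finset.sum_div, sum_mass M π μ0 hπ n s, div_self h]

lemma sig_step (hπ : IsPathStrategy M π) (h0 : ∀ s, 0 ≤ μ0 s) (n : ℕ) :
    mdpStep M (sig M π μ0 n) (distStream M π μ0 n) = distStream M π μ0 (n + 1) := by
  funext s'
  unfold mdpStep
  rw [distStream_succ]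
  refine Finset.sum_congr rfl fun s _ => Finset.sum_congr rfl fun a _ => ?_
  by_cases h : distStream M π μ0 n s = 0
  · have hm : mass M π μ0 n s a = 0 :=
      (Finset.sum_eq_zero_iff_of_nonneg
        (fun a _ => mass_nonneg M π μ0 hπ h0 n s a)).mp
        ((sum_mass M π μ0 hπ n s).trans h) a (Finset.mem_univ a)
    rw [hm, h, zero_mul, zero_mul]
  · simp only [sig, if_neg h]
    rw [mul_comm (distStream M π μ0 n s), div_mul_cancel₀ _ h]

/-- The distribution strategy induced by a path strategy. -/
noncomputable def tau : (S → ℝ) → S → Act → ℝ := fun μ =>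
  if h : ∃ n, distStream M π μ0 n = μ then sig M π μ0 (Nat.find h) else dflt M

lemma tau_oneStep (hπ : IsPathStrategy M π) (h0 : ∀ s, 0 ≤ μ0 s) (μ : S → ℝ) :
    IsOneStep M (tau M π μ0 μ) := by
  unfold tau; split
  · exact sig_oneStep M π μ0 hπ h0 _
  · exact dflt_oneStep M

lemma tau_range (hπ : IsPathStrategy M π) (h0 : ∀ s, 0 ≤ μ0 s) (k : ℕ) :
    ∃ n, tauStream M (tau M π μ0) μ0 k = distStream M π μ0 n := by
  induction k with
  | zero => exact ⟨0, funext fun s => (distStream_zero M π μ0 s).symm⟩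
  | succ k ih =>
    obtain ⟨n, hk⟩ := ih
    have h : ∃ m, distStream M π μ0 m = tauStream M (tau M π μ0) μ0 k := ⟨n, hk.symm⟩
    refine ⟨Nat.find h + 1, ?_⟩
    show mdpStep M (tau M π μ0 (tauStream M (tau M π μ0) μ0 k))
        (tauStream M (tau M π μ0) μ0 k) = _
    have hspec := Nat.find_spec h
    rw [tau, dif_pos h]
    generalize Nat.find h = m at hspec ⊢
    rw [← hspec]
    exact sig_step M π μ0 hπ h0 m

end Main
theorem distribution_strategies_suffice (M : MDP S Act) (μ0 : S → ℝ) (hμ0 : IsDist μ0)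
    (H : Set (S → ℝ)) (hH : H ⊆ {μ | IsDist μ}) :
    (∃ π : FinPath S Act → Act → ℝ, IsPathStrategy M π ∧ ∀ n, distStream M π μ0 n ∈ H) ↔
    (∃ τ : (S → ℝ) → S → Act → ℝ, (∀ μ, IsOneStep M (τ μ)) ∧
      ∀ n, tauStream M τ μ0 n ∈ H) := by
  constructor
  · rintro ⟨π, hπ, hsafe⟩
    refine ⟨tau M π μ0, tau_oneStep M π μ0 hπ hμ0.1, fun k => ?_⟩
    obtain ⟨n, hk⟩ := tau_range M π μ0 hπ hμ0.1 k
    rw [hk]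
    exact hsafe n
  · rintro ⟨τ, hτ, hsafe⟩
    refine ⟨fun ρ a => τ (tauStream M τ μ0 ρ.2.length) (lastState ρ) a, fun ρ => hτ _ (lastState ρ), fun n => ?_⟩
    have key : ∀ m, distStream M (fun ρ a => τ (tauStream M τ μ0 ρ.2.length) (lastState ρ) a) μ0 m
        = tauStream M τ μ0 m := by
      intro m
      induction m with
      | zero => exact funext fun s => distStream_zero M _ μ0 s
      | succ m ih =>
        funext s'
        rw [distStream_succ]
        show _ = mdpStep M (τ (tauStream M τ μ0 m)) (tauStream M τ μ0 m) s'
        unfold mdpStep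
        refine Finset.sum_congr rfl fun s _ => Finset.sum_congr rfl fun a _ => ?_
        rw [mass_of_oneStep M _ μ0 m (τ (tauStream M τ μ0 m))
          (fun s0 f a => by simp [List.length_ofFn]), ih]
    rw [key n]
    exact hsafe n
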